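/- arXiv:1504.04984 — 5 statements merged into one kernel-verified Lean document; each statement's English description precedes it below -/
import Mathlib

section
/- The set Well_d of very well approximable points of ℝ^d has d-dimensional Lebesgue measure zero; equivalently, every set J_{d,τ} with τ > 1 + 1/d has d-dimensional Lebesgue measure zero. -/
open MeasureTheory Filter Set
open scoped Topology ENNReal

noncomputable section

/-- The set `J_{d,τ}` of points of `ℝ^d` (with the supremum norm) lying within distance
`q^{-τ}` of a rational point `p/q` for infinitely many pairs `(p,q) ∈ ℤ^d × ℕ`. -/
def Jset (d : ℕ) (τ : ℝ) : Set (Fin d → ℝ) :=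
  {x | {pq : (Fin d → ℤ) × ℕ | 0 < pq.2 ∧
    ‖x - fun i => (pq.1 i : ℝ) / (pq.2 : ℝ)‖ < (pq.2 : ℝ) ^ (-τ)}.Infinite}

lemma Jset_mono {d : ℕ} {τ' τ : ℝ} (h : τ' ≤ τ) : Jset d τ ⊆ Jset d τ' := by
  intro x hx
  refine hx.mono ?_
  rintro ⟨p, q⟩ ⟨hq, hlt⟩
  refine ⟨hq, hlt.trans_le ?_⟩
  exact Real.rpow_le_rpow_of_exponent_le (by exact_mod_cast hq) (neg_le_neg h)

lemma volume_Jset_zero {d : ℕ} (hd : 1 ≤ d) {τ : ℝ} (hτ : 1 + 1 / (d : ℝ) < τ) :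
    volume (Jset d τ) = 0 := by
  have hd0 : (0:ℝ) < d := by exact_mod_cast hd
  have hτ1 : (1:ℝ) < τ := lt_of_le_of_lt (le_add_of_nonneg_right (by positivity)) hτ
  -- the covering balls
  set A : ℕ → ℕ → Set (Fin d → ℝ) := fun N q =>
    ⋃ p ∈ Finset.Icc (fun _ : Fin d => -((N+1) * q : ℤ)) (fun _ => ((N+1) * q : ℤ)),
      Metric.ball (fun i => (p i : ℝ) / (q : ℝ)) ((q:ℝ) ^ (-τ)) with hA
  -- key coordinate bound
  have hkey : ∀ (N : ℕ) (x : Fin d → ℝ), ‖x‖ ≤ N → ∀ p : Fin d → ℤ, ∀ q : ℕ, 0 < q →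
      ‖x - fun i => (p i : ℝ) / (q : ℝ)‖ < (q : ℝ) ^ (-τ) →
      (∀ i, |p i| ≤ ((N+1) * q : ℤ)) ∧ x ∈ A N q := by
    intro N x hxN p q hq hlt
    have hq1 : (1:ℝ) ≤ q := by exact_mod_cast hq
    have hr1 : (q:ℝ) ^ (-τ) ≤ 1 :=
      Real.rpow_le_one_of_one_le_of_nonpos hq1 (by linarith)
    have hp : ∀ i, |p i| ≤ ((N+1) * q : ℤ) := by
      intro i
      have h1 : |x i - (p i : ℝ) / q| ≤ ‖x - fun i => (p i : ℝ) / (q : ℝ)‖ := by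
        simpa using norm_le_pi_norm (x - fun i => (p i : ℝ) / (q : ℝ)) i
      have h2 : |x i| ≤ N := (show |x i| ≤ ‖x‖ by simpa using norm_le_pi_norm x i).trans hxN
      have h3 : |(p i : ℝ) / q| ≤ N + 1 := by
        have := abs_sub_abs_le_abs_sub ((p i : ℝ) / q) (x i)
        have h4 : |(p i : ℝ) / q - x i| ≤ 1 := by
          rw [abs_sub_comm]; linarith [h1.trans_lt hlt]
        linarith
      have hq0 : (0:ℝ) < q := by positivity
      have h5 : |(p i : ℝ)| ≤ ((N:ℝ) + 1) * q := by
        rw [abs_div] at h3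
        have := (div_le_iff₀ hq0).mp (by simpa [abs_of_pos hq0] using h3)
        simpa using this
      exact_mod_cast (by push_cast; convert h5 using 2 <;> ring_nf : |(p i : ℝ)| ≤ (((N+1) * q : ℤ) : ℝ))
    refine ⟨hp, ?_⟩
    rw [hA]
    refine mem_iUnion₂.2 ⟨p, ?_, ?_⟩
    · rw [Finset.mem_Icc]
      exact ⟨fun i => neg_le_of_abs_le (hp i), fun i => le_of_abs_le (hp i)⟩
    · rw [Metric.mem_ball, dist_eq_norm]; exact hlt
  -- claim 1: subset of limsup
  have hsub : ∀ N : ℕ, Jset d τ ∩ Metric.closedBall 0 N ⊆ limsup (A N) atTop := by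
    intro N x hx
    obtain ⟨hxJ, hxB⟩ := hx
    have hxN : ‖x‖ ≤ N := by simpa using Metric.mem_closedBall.mp hxB
    rw [mem_limsup_iff_frequently_mem, frequently_atTop]
    intro Q
    by_contra hcon
    push_neg at hcon
    -- then all pairs have q < Q, so the pair set is finite
    refine hxJ ?_
    have hss : {pq : (Fin d → ℤ) × ℕ | 0 < pq.2 ∧
        ‖x - fun i => (pq.1 i : ℝ) / (pq.2 : ℝ)‖ < (pq.2 : ℝ) ^ (-τ)} ⊆
        (↑(Finset.Icc (fun _ : Fin d => -((N+1) * Q : ℤ)) (fun _ => ((N+1) * Q : ℤ))) : Set _) ×ˢ Set.Iio Q := by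
      rintro ⟨p, q⟩ ⟨hq, hlt⟩
      obtain ⟨hp, hmem⟩ := hkey N x hxN p q hq hlt
      have hqQ : q < Q := by
        by_contra hqQ
        exact hcon q (le_of_not_gt hqQ) hmem
      constructor
      · simp only [Finset.coe_Icc, Set.mem_Icc]
        constructor
        · intro i
          show -(((N:ℤ)+1) * Q) ≤ p i
          have := neg_le_of_abs_le (hp i)
          have h2 : ((N+1) * q : ℤ) ≤ (N+1) * Q := by
            have : (q:ℤ) ≤ Q := by exact_mod_cast hqQ.le
            exact mul_le_mul_of_nonneg_left this (by positivity)
          linarith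
        · intro i
          show p i ≤ ((N:ℤ)+1) * Q
          have := le_of_abs_le (hp i)
          have h2 : ((N+1) * q : ℤ) ≤ (N+1) * Q := by
            have : (q:ℤ) ≤ Q := by exact_mod_cast hqQ.le
            exact mul_le_mul_of_nonneg_left this (by positivity)
          linarith
      · exact hqQ
    exact ((Finset.finite_toSet _).prod (Set.finite_Iio Q)).subset hss
  -- exponent
  set p0 : ℝ := (1 - τ) * d with hp0
  have hp0lt : p0 < -1 := by
    have h1 : 1 / (d:ℝ) < τ - 1 := by linarith
    rw [div_lt_iff₀ hd0] at h1
    have he : (1 - τ) * (d:ℝ) = -((τ - 1) * d) := by ring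
    rw [hp0, he]
    linarith
  have hp0ne : p0 ≠ 0 := by intro h; rw [h] at hp0lt; norm_num at hp0lt
  -- claim 2: volume bound
  have hvol : ∀ N q : ℕ, volume (A N q) ≤ ENNReal.ofReal ((6*((N:ℝ)+1))^d * (q:ℝ)^p0) := by
    intro N q
    rcases Nat.eq_zero_or_pos q with h0 | hq
    · subst h0
      have hAe : A N 0 = ∅ := by
        rw [hA]
        simp [Real.zero_rpow (show -τ ≠ 0 by intro h; simp at h; linarith),
          Metric.ball_eq_empty.2 le_rfl]
      simp [hAe]
    · have hq0 : (0:ℝ) < q := by exact_mod_cast hq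
      have hq1 : (1:ℝ) ≤ q := by exact_mod_cast hq
      have hr : (0:ℝ) < (q:ℝ) ^ (-τ) := Real.rpow_pos_of_pos hq0 _
      have hcard : (Finset.Icc (fun _ : Fin d => -((N+1) * q : ℤ)) (fun _ => ((N+1) * q : ℤ))).card
          = (2 * ((N+1) * (q:ℤ)) + 1).toNat ^ d := by
        rw [Pi.card_Icc]
        have : ∀ i : Fin d, (Finset.Icc (-((N+1) * (q:ℤ))) ((N+1) * q)).card
            = (2 * ((N+1) * (q:ℤ)) + 1).toNat := by
          intro i
          rw [Int.card_Icc]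
          congr 1
          ring
        rw [Finset.prod_congr rfl (fun i _ => this i)]
        simp
      have hle1 : volume (A N q) ≤ ((2 * ((N+1) * (q:ℤ)) + 1).toNat ^ d : ℕ) *
          ENNReal.ofReal ((2 * (q:ℝ)^(-τ))^d) := by
        rw [hA]
        refine (measure_biUnion_finset_le _ _).trans_eq ?_
        rw [Finset.sum_congr rfl (fun p _ => volume_pi_ball _ hr)]
        simp [Finset.sum_const, hcard, nsmul_eq_mul, Fintype.card_fin,
          ← ENNReal.ofReal_pow (by positivity : (0:ℝ) ≤ 2 * (q:ℝ)^(-τ))]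
        rw [ENNReal.ofReal_pow (by positivity), ENNReal.ofReal_mul (by norm_num), ENNReal.ofReal_ofNat]
      refine hle1.trans ?_
      rw [← ENNReal.ofReal_natCast ((2 * ((N+1) * (q:ℤ)) + 1).toNat ^ d),
        ← ENNReal.ofReal_mul (by positivity)]
      refine ENNReal.ofReal_le_ofReal ?_
      have hcastn : (((2 * ((N+1) * (q:ℤ)) + 1).toNat : ℕ) : ℝ) = 2*((N:ℝ)+1)*q + 1 := by
        rw [← Int.cast_natCast, Int.toNat_of_nonneg (by positivity)]
        push_cast
        ring
      rw [Nat.cast_pow, hcastn, ← mul_pow]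
      have hbase : (2*((N:ℝ)+1)*q + 1) * (2 * (q:ℝ)^(-τ)) ≤ 6*((N:ℝ)+1) * ((q:ℝ) * (q:ℝ)^(-τ)) := by
        have hNq : (1:ℝ) ≤ ((N:ℝ)+1) * q := by
          have h1N : (1:ℝ) ≤ (N:ℝ)+1 := by
            have := Nat.cast_nonneg (α := ℝ) N
            linarith
          nlinarith
        nlinarith [hr.le, mul_nonneg (mul_nonneg (by positivity : (0:ℝ) ≤ 2*((N:ℝ)+1)) hq0.le) hr.le]
      have hqq : (q:ℝ) * (q:ℝ)^(-τ) = (q:ℝ)^(1-τ) := by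
        rw [show (1-τ) = 1 + (-τ) by ring, Real.rpow_add hq0, Real.rpow_one]
      calc ((2*((N:ℝ)+1)*q + 1) * (2 * (q:ℝ)^(-τ)))^d
          ≤ (6*((N:ℝ)+1) * ((q:ℝ) * (q:ℝ)^(-τ)))^d := by
            refine pow_le_pow_left₀ (by positivity) hbase d
        _ = (6*((N:ℝ)+1))^d * (q:ℝ)^p0 := by
            rw [mul_pow, hqq, ← Real.rpow_natCast ((q:ℝ)^(1-τ)) d, ← Real.rpow_mul hq0.le, hp0]
  -- claim 3: summability
  have hsum : ∀ N : ℕ, ∑' q : ℕ, volume (A N q) ≠ ∞ := by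
    intro N
    have hS : Summable (fun q : ℕ => (6*((N:ℝ)+1))^d * (q:ℝ)^p0) :=
      (Real.summable_nat_rpow.2 hp0lt).mul_left _
    refine ne_top_of_le_ne_top ?_ (ENNReal.tsum_le_tsum (hvol N))
    rw [← ENNReal.ofReal_tsum_of_nonneg (fun q => by positivity) hS]
    exact ENNReal.ofReal_ne_top
  -- conclude
  have hNzero : ∀ N : ℕ, volume (Jset d τ ∩ Metric.closedBall 0 N) = 0 := fun N =>
    le_antisymm ((measure_mono (hsub N)).trans_eq (measure_limsup_atTop_eq_zero (hsum N)))
      zero_le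
  have hcover : Jset d τ ⊆ ⋃ N : ℕ, Jset d τ ∩ Metric.closedBall 0 N := by
    intro x hx
    exact mem_iUnion.2 ⟨⌈‖x‖⌉₊, hx, by
      simpa [Metric.mem_closedBall, dist_zero_right] using Nat.le_ceil ‖x‖⟩
  exact le_antisymm ((measure_mono hcover).trans_eq (measure_iUnion_null hNzero)) zero_le

/-- Points of `ℝ^d` with all coordinates rational. -/
def ratPts (d : ℕ) : Set (Fin d → ℝ) := {x | ∀ i, ∃ q : ℚ, x i = (q : ℝ)}

/-- The irrationality exponent `τ(x) = sup {τ ∈ ℝ | x ∈ J_{d,τ}}`. -/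
def irrExp (d : ℕ) (x : Fin d → ℝ) : EReal :=
  sSup ((fun τ : ℝ => (τ : EReal)) '' {τ : ℝ | x ∈ Jset d τ})

/-- The set of very well approximable points: points outside `ℚ^d` whose irrationality
exponent exceeds `1 + 1/d`. -/
def VeryWell (d : ℕ) : Set (Fin d → ℝ) :=
  {x | x ∉ ratPts d ∧ ((1 + 1 / (d : ℝ) : ℝ) : EReal) < irrExp d x}

/-- The set of very well approximable points has Lebesgue measure zero; equivalently, all
the sets `J_{d,τ}` with `τ > 1 + 1/d` have Lebesgue measure zero. -/
theorem stmt0 (d : ℕ) (hd : 1 ≤ d) :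
    volume (VeryWell d) = 0 ∧
      ∀ τ : ℝ, 1 + 1 / (d : ℝ) < τ → volume (Jset d τ) = 0 := by
  refine ⟨?_, fun τ hτ => volume_Jset_zero hd hτ⟩
  have hsub : VeryWell d ⊆ ⋃ n : ℕ, Jset d (1 + 1/(d:ℝ) + 1/((n:ℝ)+1)) := by
    intro x hx
    obtain ⟨-, hlt⟩ := hx
    rw [irrExp, lt_sSup_iff] at hlt
    obtain ⟨a, ⟨τ0, hτ0, rfl⟩, hlt⟩ := hlt
    have hτ0lt : 1 + 1/(d:ℝ) < τ0 := by
      simp only at hlt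
      exact_mod_cast hlt
    obtain ⟨n, hn⟩ := exists_nat_one_div_lt (show (0:ℝ) < τ0 - (1 + 1/(d:ℝ)) by linarith)
    exact mem_iUnion.2 ⟨n, Jset_mono (by push_cast at hn ⊢; linarith) hτ0⟩
  refine le_antisymm ((measure_mono hsub).trans_eq (measure_iUnion_null fun n =>
    volume_Jset_zero hd ?_)) zero_le
  have : (0:ℝ) < 1/((n:ℝ)+1) := by positivity
  linarith
end
end

section
/- Let g be a gauge function and let ℓ_g = liminf_{r→0} g(r)/r^d ∈ [0,∞]. Then: (1) if ℓ_g = ∞, then every Borel set B ⊆ ℝ^d with L^d(B) > 0 satisfies H^g(B) = ∞; (2) if ℓ_g ∈ (0,∞), then there exists a real number κ_g > 0 such that H^g(B) = κ_g · L^d(B) for every Borel set B ⊆ ℝ^d; (3) if ℓ_g = 0, then H^g(E) = 0 for every set E ⊆ ℝ^d. -/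
open MeasureTheory Filter Set
open scoped Topology ENNReal

noncomputable section

/-- A gauge function: a function on `[0,∞]` that is nondecreasing in a neighborhood of `0`,
satisfies `lim_{r→0} g(r) = g(0) = 0`, and `g(∞) = ∞`. -/
def IsGauge (g : ℝ≥0∞ → ℝ≥0∞) : Prop :=
  g 0 = 0 ∧ Tendsto g (𝓝[>] (0 : ℝ≥0∞)) (𝓝 0) ∧ g ⊤ = ⊤ ∧
    ∃ ε > (0 : ℝ≥0∞), MonotoneOn g (Set.Iio ε)

lemma lower_bound (d : ℕ) (hd : 1 ≤ d) (g : ℝ≥0∞ → ℝ≥0∞) {c : ℝ≥0∞}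
    (hc0 : c ≠ 0) (hct : c ≠ ⊤)
    (hc : c < Filter.liminf (fun r : ℝ≥0∞ => g r / r ^ d) (𝓝[>] (0:ℝ≥0∞))) :
    ∀ s : Set (Fin d → ℝ), c * volume s ≤ Measure.mkMetric g s := by
  have hev0 : ∀ᶠ r in 𝓝[>] (0:ℝ≥0∞), c < g r / r ^ d :=
    eventually_lt_of_lt_liminf hc
  have hev1 : ∀ᶠ r in 𝓝[>] (0:ℝ≥0∞), r < 1 := by
    have : Tendsto (id : ℝ≥0∞ → ℝ≥0∞) (𝓝[>] 0) (𝓝 0) :=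
      tendsto_id.mono_left nhdsWithin_le_nhds
    exact this.eventually_lt_const zero_lt_one
  have hle : (fun r : ℝ≥0∞ => r ^ (d:ℝ)) ≤ᶠ[𝓝[≥] (0:ℝ≥0∞)] c⁻¹ • g := by
    have hsplit : 𝓝[≥] (0:ℝ≥0∞) = pure 0 ⊔ 𝓝[>] (0:ℝ≥0∞) := by
      rw [← Set.Ioi_insert, nhdsWithin_insert]
    rw [EventuallyLE, hsplit, eventually_sup]
    constructor
    · rw [eventually_pure]
      simp [ENNReal.zero_rpow_of_pos (by exact_mod_cast Nat.pos_of_ne_zero (by omega) : (0:ℝ) < d)]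
    · filter_upwards [hev0, hev1, self_mem_nhdsWithin] with r hr hr1 hr0
      have hrd0 : r ^ d ≠ 0 := pow_ne_zero _ (ne_of_gt hr0)
      have hrdt : r ^ d ≠ ⊤ := ENNReal.pow_ne_top (ne_top_of_lt hr1)
      have h1 : c * r ^ d ≤ g r :=
        (ENNReal.le_div_iff_mul_le (Or.inl hrd0) (Or.inl hrdt)).1 hr.le
      have h2 : r ^ (d:ℝ) = r ^ d := ENNReal.rpow_natCast r d
      calc r ^ (d:ℝ) = (c⁻¹ * c) * r ^ d := by
            rw [ENNReal.inv_mul_cancel hc0 hct, one_mul, h2]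
        _ = c⁻¹ * (c * r ^ d) := by ring
        _ ≤ c⁻¹ * g r := by gcongr
  have H : (MeasureTheory.Measure.mkMetric (fun r : ℝ≥0∞ => r ^ (d:ℝ)) :
      Measure (Fin d → ℝ)) ≤ c⁻¹ • Measure.mkMetric g :=
    Measure.mkMetric_mono_smul (ENNReal.inv_ne_top.2 hc0) (ENNReal.inv_ne_zero.2 hct) hle
  have hvol : (μH[(d:ℝ)] : Measure (Fin d → ℝ)) = volume := by
    simpa using MeasureTheory.hausdorffMeasure_pi_real (ι := Fin d)
  intro s
  have hs : volume s ≤ c⁻¹ * Measure.mkMetric g s := by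
    have := Measure.le_iff'.1 H s
    rw [Measure.smul_apply, smul_eq_mul] at this
    calc volume s = μH[(d:ℝ)] s := by rw [hvol]
      _ ≤ _ := this
  calc c * volume s ≤ c * (c⁻¹ * Measure.mkMetric g s) := by gcongr
    _ = (c * c⁻¹) * Measure.mkMetric g s := by ring
    _ = Measure.mkMetric g s := by rw [ENNReal.mul_inv_cancel hc0 hct, one_mul]

lemma cube_bound (d : ℕ) (hd : 1 ≤ d) (g : ℝ≥0∞ → ℝ≥0∞) (hg : IsGauge g)
    (n : ℕ) (hn : 1 ≤ n) {c : ℝ≥0∞}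
    (hc : Filter.liminf (fun r : ℝ≥0∞ => g r / r ^ d) (𝓝[>] (0:ℝ≥0∞)) < c) :
    Measure.mkMetric g (Set.pi univ fun _ : Fin d => Ioo (-(n:ℝ)) n)
      ≤ ENNReal.ofReal (3*n) ^ d * c := by
  obtain ⟨-, -, -, ε, hε, hmono⟩ := hg
  set t : ∀ _r : ℝ≥0∞, (Fin d → Fin ⌈2*(n:ℝ)/_r.toReal⌉₊) → Set (Fin d → ℝ) :=
    fun r f => Set.pi univ fun i =>
      Icc (-(n:ℝ) + f i * r.toReal) (-(n:ℝ) + (f i + 1) * r.toReal) with ht_def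
  have hr : Tendsto (fun r : ℝ≥0∞ => r) (𝓝[>] 0) (𝓝 0) :=
    tendsto_id.mono_left nhdsWithin_le_nhds
  have hsmall : ∀ᶠ r in 𝓝[>] (0:ℝ≥0∞), 0 < r ∧ r < 1 ∧ r < ε := by
    filter_upwards [self_mem_nhdsWithin, hr.eventually_lt_const zero_lt_one,
      hr.eventually_lt_const hε] with r h1 h2 h3
    exact ⟨h1, h2, h3⟩
  -- diameters
  have hdiam : ∀ r : ℝ≥0∞, 0 < r → r < 1 → ∀ f, EMetric.diam (t r f) ≤ r := by
    intro r h0 h1 f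
    have hrt : r ≠ ⊤ := ne_top_of_lt h1
    have hofr : ENNReal.ofReal r.toReal = r := ENNReal.ofReal_toReal hrt
    refine EMetric.diam_pi_le_of_le fun i => ?_
    rw [Real.ediam_Icc]
    rw [show (-(n:ℝ) + (f i + 1) * r.toReal) - (-(n:ℝ) + f i * r.toReal) = r.toReal by ring]
    exact le_of_eq hofr
  have hB : ∀ᶠ r in 𝓝[>] (0:ℝ≥0∞), ∀ f, EMetric.diam (t r f) ≤ r := by
    filter_upwards [hsmall] with r hrr
    exact hdiam r hrr.1 hrr.2.1
  -- covering
  have hC : ∀ᶠ r in 𝓝[>] (0:ℝ≥0∞),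
      (Set.pi univ fun _ : Fin d => Ioo (-(n:ℝ)) n) ⊆ ⋃ f, t r f := by
    filter_upwards [hsmall] with r hrr x hx
    obtain ⟨h0, h1, -⟩ := hrr
    have hrt : r ≠ ⊤ := ne_top_of_lt h1
    have hs0 : 0 < r.toReal := ENNReal.toReal_pos h0.ne' hrt
    simp only [mem_univ_pi, mem_Ioo] at hx
    set s := r.toReal
    have hfx : ∀ i : Fin d, ⌊(x i + n)/s⌋₊ < ⌈2*(n:ℝ)/s⌉₊ := by
      intro i
      refine Nat.floor_lt_ceil_of_lt_of_pos ?_ (by positivity)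
      have : x i + n < 2*n := by have := (hx i).2; linarith
      exact div_lt_div_of_pos_right this hs0
    simp only [mem_iUnion]
    refine ⟨fun i => ⟨⌊(x i + n)/s⌋₊, hfx i⟩, ?_⟩
    simp only [ht_def, mem_univ_pi, mem_Icc]
    intro i
    have hnn : 0 ≤ (x i + n)/s := by
      have := (hx i).1
      have hxn : 0 ≤ x i + n := by linarith
      positivity
    constructor
    · have h := Nat.floor_le hnn
      have := mul_le_mul_of_nonneg_right h hs0.le
      rw [div_mul_cancel₀ _ hs0.ne'] at this
      linarith
    · have h := Nat.lt_floor_add_one ((x i + n)/s)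
      have := mul_lt_mul_of_pos_right h hs0
      rw [div_mul_cancel₀ _ hs0.ne'] at this
      push_cast at this ⊢
      linarith
  have key := Measure.mkMetric_le_liminf_sum
    (Set.pi univ fun _ : Fin d => Ioo (-(n:ℝ)) n) (fun r : ℝ≥0∞ => r) hr t hB hC g
  refine key.trans (liminf_le_of_frequently_le' ?_)
  have hfr : ∃ᶠ r in 𝓝[>] (0:ℝ≥0∞), g r / r ^ d < c :=
    frequently_lt_of_liminf_lt (by isBoundedDefault) hc
  refine (hfr.and_eventually hsmall).mono ?_
  rintro r ⟨hlt, h0, h1, hrε⟩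
  have hrt : r ≠ ⊤ := ne_top_of_lt h1
  set s := r.toReal with hs_def
  have hs0 : 0 < s := ENNReal.toReal_pos h0.ne' hrt
  have hofs : ENNReal.ofReal s = r := ENNReal.ofReal_toReal hrt
  have hgle : ∀ f, g (EMetric.diam (t r f)) ≤ g r := by
    intro f
    exact hmono (mem_Iio.2 (lt_of_le_of_lt (hdiam r h0 h1 f) hrε)) (mem_Iio.2 hrε)
      (hdiam r h0 h1 f)
  have hcard : (Fintype.card (Fin d → Fin ⌈2*(n:ℝ)/s⌉₊) : ℝ≥0∞)
      = ((⌈2*(n:ℝ)/s⌉₊ : ℝ≥0∞)) ^ d := by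
    simp [Fintype.card_fun]
  have hs1 : s < 1 := by
    rw [hs_def]
    rw [show (1:ℝ) = (1:ℝ≥0∞).toReal by simp]
    exact ENNReal.toReal_strict_mono ENNReal.one_ne_top h1
  have hsn : s ≤ (n:ℝ) := by
    have : (1:ℝ) ≤ n := by exact_mod_cast hn
    linarith
  have hceil : ((⌈2*(n:ℝ)/s⌉₊ : ℝ≥0∞)) ≤ ENNReal.ofReal (3*n) / r := by
    rw [← hofs, ← ENNReal.ofReal_div_of_pos hs0, ← ENNReal.ofReal_natCast]
    apply ENNReal.ofReal_le_ofReal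
    have h2 : (⌈2*(n:ℝ)/s⌉₊ : ℝ) < 2*(n:ℝ)/s + 1 :=
      Nat.ceil_lt_add_one (by positivity)
    have h3 : 2*(n:ℝ)/s + 1 ≤ 3*n/s := by
      have h4 : (2*(n:ℝ) + s)/s ≤ (3*n)/s := by
        gcongr
        linarith
      rw [add_div, div_self hs0.ne'] at h4
      linarith
    linarith
  have hglec : g r ≤ c * r ^ d := by
    have hrd0 : r ^ d ≠ 0 := pow_ne_zero _ h0.ne'
    have hrdt : r ^ d ≠ ⊤ := ENNReal.pow_ne_top hrt
    exact ((ENNReal.div_lt_iff (Or.inl hrd0) (Or.inl hrdt)).1 hlt).le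
  calc (∑ f, g (EMetric.diam (t r f)))
      ≤ ∑ _f : (Fin d → Fin ⌈2*(n:ℝ)/s⌉₊), g r := Finset.sum_le_sum fun f _ => hgle f
    _ = (Fintype.card (Fin d → Fin ⌈2*(n:ℝ)/s⌉₊) : ℝ≥0∞) * g r := by
        rw [Finset.sum_const, Finset.card_univ, nsmul_eq_mul]
    _ ≤ (ENNReal.ofReal (3*n) / r) ^ d * (c * r ^ d) := by
        rw [hcard]
        gcongr
    _ = ENNReal.ofReal (3*n) ^ d * c * ((r ^ d)⁻¹ * r ^ d) := by
        rw [div_eq_mul_inv, mul_pow, ENNReal.inv_pow]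
        ring
    _ = ENNReal.ofReal (3*n) ^ d * c := by
        rw [ENNReal.inv_mul_cancel (pow_ne_zero _ h0.ne') (ENNReal.pow_ne_top hrt), mul_one]

set_option maxHeartbeats 1000000 in
/-- The trichotomy for `ℓ_g = liminf_{r→0} g(r)/r^d`: if `ℓ_g = ∞` the Hausdorff `g`-measure
is infinite on Borel sets of positive Lebesgue measure; if `0 < ℓ_g < ∞` it is a positive
multiple of Lebesgue measure on Borel sets; if `ℓ_g = 0` it vanishes identically. -/
theorem stmt3 (d : ℕ) (hd : 1 ≤ d) (g : ℝ≥0∞ → ℝ≥0∞) (hg : IsGauge g) :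
    (Filter.liminf (fun r : ℝ≥0∞ => g r / r ^ d) (𝓝[>] (0 : ℝ≥0∞)) = ⊤ →
      ∀ B : Set (Fin d → ℝ), MeasurableSet B → 0 < volume B →
        Measure.mkMetric g B = ⊤) ∧
    (Filter.liminf (fun r : ℝ≥0∞ => g r / r ^ d) (𝓝[>] (0 : ℝ≥0∞)) ≠ 0 →
      Filter.liminf (fun r : ℝ≥0∞ => g r / r ^ d) (𝓝[>] (0 : ℝ≥0∞)) ≠ ⊤ →
      ∃ κ : ℝ, 0 < κ ∧ ∀ B : Set (Fin d → ℝ), MeasurableSet B →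
        Measure.mkMetric g B = ENNReal.ofReal κ * volume B) ∧
    (Filter.liminf (fun r : ℝ≥0∞ => g r / r ^ d) (𝓝[>] (0 : ℝ≥0∞)) = 0 →
      ∀ E : Set (Fin d → ℝ), Measure.mkMetric g E = 0) := by
  set L := Filter.liminf (fun r : ℝ≥0∞ => g r / r ^ d) (𝓝[>] (0 : ℝ≥0∞)) with hL_def
  refine ⟨?_, ?_, ?_⟩
  · -- L = ⊤
    intro hL B _hB hvol
    rcases eq_or_ne (volume B) ⊤ with hv | hv
    · have := lower_bound d hd g (c := 1) one_ne_zero ENNReal.one_ne_top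
        (lt_of_lt_of_le (show (1:ℝ≥0∞) < L by rw [hL]; exact ENNReal.one_lt_top)
          (le_of_eq hL_def)) B
      rw [hv] at this
      rw [one_mul] at this
      exact top_le_iff.1 this
    · rw [eq_top_iff, ← ENNReal.iSup_natCast]
      refine iSup_le fun k => ?_
      set c : ℝ≥0∞ := (k+1) * (volume B)⁻¹ with hc_def
      have hc0 : c ≠ 0 := by
        apply mul_ne_zero
        · exact_mod_cast Nat.succ_ne_zero k
        · exact ENNReal.inv_ne_zero.2 hv
      have hct : c ≠ ⊤ := ENNReal.mul_ne_top (by simp) (ENNReal.inv_ne_top.2 hvol.ne')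
      have hcL : c < L := by rw [hL]; exact lt_top_iff_ne_top.2 hct
      have := lower_bound d hd g hc0 hct (lt_of_lt_of_le hcL (le_of_eq hL_def)) B
      calc (k:ℝ≥0∞) ≤ (k+1:ℕ) := by exact_mod_cast Nat.le_succ k
        _ = c * volume B := by
            rw [hc_def, mul_assoc, ENNReal.inv_mul_cancel hvol.ne' hv, mul_one]
            push_cast; ring
        _ ≤ _ := this
  · -- 0 < L < ⊤
    intro hL0 hLt
    set μ : Measure (Fin d → ℝ) := Measure.mkMetric g with hμ
    have himg : ∀ (x : Fin d → ℝ) (s : Set (Fin d → ℝ)),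
        Measure.mkMetric g ((fun y => x + y) '' s) = Measure.mkMetric g s := by
      intro x s
      have hiso : Isometry (fun y : Fin d → ℝ => x + y) :=
        Isometry.of_dist_eq fun a b => dist_add_left x a b
      have hsurj : Function.Surjective (fun y : Fin d → ℝ => x + y) :=
        fun y => ⟨-x + y, add_neg_cancel_left x y⟩
      simp only [← OuterMeasure.coe_mkMetric, ← OuterMeasure.comap_apply]
      rw [OuterMeasure.isometry_comap_mkMetric _ hiso (Or.inr hsurj)]
    haveI hinv : μ.IsAddLeftInvariant := by
      constructor
      intro x
      ext1 s hs
      rw [Measure.map_apply (measurable_const_add x) hs]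
      have hpre : (fun y : Fin d → ℝ => x + y) ⁻¹' s = (fun y => -x + y) '' s := by
        ext y
        simp only [mem_preimage, mem_image]
        constructor
        · intro h; exact ⟨x + y, h, by abel⟩
        · rintro ⟨z, hz, rfl⟩
          simpa [show x + (-x + z) = z by abel] using hz
      rw [hμ, hpre, himg]
    obtain ⟨c, hcL, hc0⟩ : ∃ c : ℝ≥0∞, c < L ∧ c ≠ 0 := by
      refine ⟨L/2, ENNReal.half_lt_self hL0 hLt, ?_⟩
      simpa using (ENNReal.half_pos hL0).ne'
    have hct : c ≠ ⊤ := ne_top_of_lt (hcL.trans_le le_top)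
    have hlow := lower_bound d hd g hc0 hct hcL
    haveI hopen : μ.IsOpenPosMeasure := by
      constructor
      intro U hU hne
      have h1 : 0 < volume U := hU.measure_pos volume hne
      intro h2
      have := hlow U
      rw [← hμ, h2, nonpos_iff_eq_zero] at this
      exact (mul_ne_zero hc0 h1.ne') this
    haveI hfin : IsFiniteMeasureOnCompacts μ := by
      constructor
      intro K hK
      obtain ⟨R, hR⟩ := hK.isBounded.subset_closedBall 0
      set n : ℕ := ⌈R⌉₊ + 1 with hn_def
      have hKQ : K ⊆ Set.pi univ fun _ : Fin d => Ioo (-(n:ℝ)) n := by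
        intro x hx
        have hdist : dist x 0 ≤ R := Metric.mem_closedBall.1 (hR hx)
        simp only [mem_univ_pi, mem_Ioo]
        intro i
        have h1 : dist (x i) 0 ≤ dist x 0 := dist_le_pi_dist x 0 i
        rw [Real.dist_0_eq_abs] at h1
        have h2 : |x i| < n := by
          have : R ≤ (⌈R⌉₊:ℝ) := Nat.le_ceil R
          have : (⌈R⌉₊:ℝ) < n := by rw [hn_def]; push_cast; linarith
          calc |x i| ≤ dist x 0 := h1
            _ ≤ R := hdist
            _ < n := by linarith [Nat.le_ceil R]
        rw [abs_lt] at h2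
        exact ⟨h2.1, h2.2⟩
      have hLL : L < L + 1 := ENNReal.lt_add_right hLt one_ne_zero
      calc μ K ≤ μ (Set.pi univ fun _ : Fin d => Ioo (-(n:ℝ)) n) := measure_mono hKQ
        _ ≤ ENNReal.ofReal (3*(n:ℕ)) ^ d * (L + 1) :=
            cube_bound d hd g hg n (Nat.le_add_left 1 _)
              (lt_of_le_of_lt (le_of_eq hL_def.symm) hLL)
        _ < ⊤ := by
            apply ENNReal.mul_lt_top
            · exact ENNReal.pow_lt_top ENNReal.ofReal_lt_top
            · exact ENNReal.add_lt_top.2 ⟨lt_top_iff_ne_top.2 hLt, ENNReal.one_lt_top⟩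
    haveI : μ.IsAddHaarMeasure := ⟨⟩
    have heq := Measure.isAddLeftInvariant_eq_smul μ volume
    set κ : NNReal := Measure.addHaarScalarFactor μ volume with hκ_def
    have hκ : 0 < κ := Measure.addHaarScalarFactor_pos_of_isAddHaarMeasure μ volume
    refine ⟨(κ:ℝ), by exact_mod_cast hκ, fun B _hB => ?_⟩
    rw [heq]
    rw [Measure.smul_apply, ENNReal.smul_def, smul_eq_mul, ENNReal.ofReal_coe_nnreal]
  · -- L = 0
    intro hL E
    have hQ : ∀ n : ℕ,
        Measure.mkMetric g (Set.pi univ fun _ : Fin d => Ioo (-((n+1:ℕ):ℝ)) (n+1:ℕ)) = 0 := by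
      intro n
      set K : ℝ≥0∞ := ENNReal.ofReal (3*(n+1:ℕ)) ^ d with hK_def
      have hKt : K ≠ ⊤ := by
        rw [hK_def]; exact ENNReal.pow_ne_top ENNReal.ofReal_ne_top
      have hb : ∀ k : ℕ, Measure.mkMetric g
          (Set.pi univ fun _ : Fin d => Ioo (-((n+1:ℕ):ℝ)) (n+1:ℕ)) ≤ K * ((k:ℝ≥0∞))⁻¹ := by
        intro k
        refine cube_bound d hd g hg (n+1) (Nat.le_add_left 1 _) ?_
        refine lt_of_le_of_lt (le_of_eq hL_def.symm) ?_
        rw [hL]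
        exact ENNReal.inv_pos.2 (ENNReal.natCast_ne_top k)
      have htend : Tendsto (fun k : ℕ => K * ((k:ℝ≥0∞))⁻¹) atTop (𝓝 0) := by
        have := ENNReal.Tendsto.const_mul (a := K) ENNReal.tendsto_inv_nat_nhds_zero (Or.inr hKt)
        simpa using this
      have := ge_of_tendsto' htend hb
      exact le_antisymm this zero_le
    have huniv : (univ : Set (Fin d → ℝ)) ⊆
        ⋃ n : ℕ, Set.pi univ fun _ : Fin d => Ioo (-((n+1:ℕ):ℝ)) (n+1:ℕ) := by
      intro x _
      simp only [mem_iUnion, mem_univ_pi, mem_Ioo]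
      refine ⟨⌈‖x‖⌉₊, fun i => ?_⟩
      have h1 : |x i| ≤ ‖x‖ := by
        have := norm_le_pi_norm x i
        simpa using this
      have h2 : ‖x‖ ≤ (⌈‖x‖⌉₊:ℝ) := Nat.le_ceil _
      have h3 : |x i| < ((⌈‖x‖⌉₊+1:ℕ):ℝ) := by push_cast; linarith
      rw [abs_lt] at h3
      exact ⟨h3.1, h3.2⟩
    refine le_antisymm ?_ zero_le
    calc Measure.mkMetric g E ≤ Measure.mkMetric g univ := measure_mono (subset_univ E)
      _ ≤ 0 := by
          rw [← nonpos_iff_eq_zero] at *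
          have := measure_iUnion_null (μ := (Measure.mkMetric g : Measure (Fin d → ℝ)))
            (s := fun n : ℕ => Set.pi univ fun _ : Fin d => Ioo (-((n+1:ℕ):ℝ)) (n+1:ℕ)) hQ
          calc Measure.mkMetric g univ ≤ _ := measure_mono huniv
            _ = 0 := this
end
end

section
/- Let (x_i, r_i)_{i∈I} be a homogeneous ubiquitous system in a nonempty bounded open set U ⊆ ℝ^d. Then for every nonempty open set V ⊆ U and every ρ > 0, there exists a finite subset I(V,ρ) of {i ∈ I : x_i ∈ U} such that r_i ≤ ρ for every i ∈ I(V,ρ), the closed balls B̄(x_i, r_i) for i ∈ I(V,ρ) are pairwise disjoint and contained in V, and ∑_{i∈I(V,ρ)} L^d(B̄(x_i, r_i)) ≥ L^d(V)/(2·3^d). -/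
open MeasureTheory Filter Set Metric
open scoped Topology ENNReal

noncomputable section

/-- An approximation system: a family `(x_i, r_i)` in `ℝ^d × (0,∞)`, indexed by a countably
infinite set, with `sup_i r_i < ∞` and, for every `m ∈ ℕ`, only finitely many indices `i`
with `|x_i| < m` and `r_i > 1/m`. -/
def IsApproxSystem {ι : Type*} {d : ℕ} (x : ι → Fin d → ℝ) (r : ι → ℝ) : Prop :=
  (∀ i, 0 < r i) ∧ BddAbove (Set.range r) ∧
    ∀ m : ℕ, {i | ‖x i‖ < (m : ℝ) ∧ 1 / (m : ℝ) < r i}.Finite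

/-- A homogeneous ubiquitous system in a nonempty open set `U`: an approximation system such
that Lebesgue-almost every `y ∈ U` satisfies `|y - x_i| < r_i` for infinitely many `i`. -/
def IsHomUbiquitous {ι : Type*} {d : ℕ} (x : ι → Fin d → ℝ) (r : ι → ℝ)
    (U : Set (Fin d → ℝ)) : Prop :=
  IsApproxSystem x r ∧
    ∀ᵐ y ∂(volume.restrict U), {i | ‖y - x i‖ < r i}.Infinite

lemma aux_tau (d : ℕ) (hd : 1 ≤ d) :
    (2 * (1 + 1 / (2 * (d:ℝ))) + 1) ^ d < 2 * 3 ^ d := by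
  have hd0 : (0:ℝ) < d := by exact_mod_cast hd
  set τ : ℝ := 1 + 1 / (2 * d) with hτdef
  have hx0 : (0:ℝ) ≤ 1 / (2 * d) := by positivity
  have hτ1 : (1:ℝ) ≤ τ := le_add_of_nonneg_right hx0
  have h1 : 2 * τ + 1 ≤ 3 * τ := by rw [hτdef]; linarith
  have h2 : (2 * τ + 1) ^ d ≤ (3 * τ) ^ d :=
    pow_le_pow_left₀ (by linarith) h1 d
  have hexp := Real.add_one_le_exp (1 / (2 * (d:ℝ)))
  have h3 : τ ^ d ≤ Real.exp (1 / (2 * d)) ^ d :=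
    pow_le_pow_left₀ (by linarith) (by rw [hτdef]; linarith) d
  have h4 : Real.exp (1 / (2 * (d:ℝ))) ^ d = Real.exp (d * (1 / (2 * d))) := by
    rw [← Real.exp_nat_mul]
  have h5 : (d:ℝ) * (1 / (2 * d)) = 1 / 2 := by
    field_simp
  have h6 : Real.exp (1/2 : ℝ) < 2 := by
    have h7 : Real.exp (1/2 : ℝ) ^ 2 < 2 ^ 2 := by
      rw [← Real.exp_nat_mul]
      norm_num
      calc Real.exp 1 < 2.7182818286 := Real.exp_one_lt_d9
        _ < 4 := by norm_num
    exact lt_of_pow_lt_pow_left₀ 2 (by norm_num) h7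
  have hτd : τ ^ d < 2 := by
    calc τ ^ d ≤ Real.exp (1 / (2 * (d:ℝ))) ^ d := h3
      _ = Real.exp (1/2:ℝ) := by rw [h4, h5]
      _ < 2 := h6
  calc (2 * τ + 1) ^ d ≤ (3 * τ) ^ d := h2
    _ = 3 ^ d * τ ^ d := by rw [mul_pow]
    _ < 3 ^ d * 2 := by
        have h8 : (0:ℝ) < 3 ^ d := by positivity
        exact (mul_lt_mul_iff_right₀ h8).2 hτd
    _ = 2 * 3 ^ d := by ring

/-- The covering lemma for homogeneous ubiquitous systems: inside every nonempty open
`V ⊆ U` and for every `ρ > 0`, one can find finitely many disjoint closed balls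
`B̄(x_i, r_i) ⊆ V` with `x_i ∈ U`, `r_i ≤ ρ`, of total Lebesgue measure at least
`L^d(V) / (2·3^d)`. -/
theorem stmt4 {ι : Type*} [Countable ι] [Infinite ι] (d : ℕ) (hd : 1 ≤ d)
    (x : ι → Fin d → ℝ) (r : ι → ℝ) (U : Set (Fin d → ℝ))
    (hUopen : IsOpen U) (hUne : U.Nonempty) (hUbdd : Bornology.IsBounded U)
    (h : IsHomUbiquitous x r U) :
    ∀ V : Set (Fin d → ℝ), V.Nonempty → IsOpen V → V ⊆ U → ∀ ρ > (0 : ℝ),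
      ∃ S : Finset ι, (∀ i ∈ S, x i ∈ U) ∧ (∀ i ∈ S, r i ≤ ρ) ∧
        ((S : Set ι).PairwiseDisjoint fun i => closedBall (x i) (r i)) ∧
        (∀ i ∈ S, closedBall (x i) (r i) ⊆ V) ∧
        volume V / (2 * 3 ^ d) ≤ ∑ i ∈ S, volume (closedBall (x i) (r i)) := by
  classical
  intro V hVne hVopen hVU ρ hρ
  obtain ⟨⟨hrpos, ⟨R, hR⟩, hfin⟩, hae⟩ := h
  have hRi : ∀ i, r i ≤ R := fun i => hR ⟨i, rfl⟩
  -- the family of admissible balls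
  set t : Set ι := {i | r i ≤ ρ ∧ closedBall (x i) (r i) ⊆ V} with ht
  have hd0 : (0:ℝ) < d := by exact_mod_cast hd
  set τ : ℝ := 1 + 1 / (2 * (d:ℝ)) with hτdef
  have hτ : (1:ℝ) < τ := by
    rw [hτdef]; exact lt_add_of_pos_right _ (by positivity)
  -- a.e. point of V is covered by the admissible balls
  have hcov : ∀ᵐ y ∂(volume.restrict V), y ∈ ⋃ i ∈ t, closedBall (x i) (r i) := by
    have h1 : ∀ᵐ y ∂(volume.restrict V), {i | ‖y - x i‖ < r i}.Infinite :=
      Eventually.filter_mono (ae_mono (Measure.restrict_mono hVU le_rfl)) hae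
    have h2 : ∀ᵐ y ∂(volume.restrict V), y ∈ V := ae_restrict_mem hVopen.measurableSet
    filter_upwards [h1, h2] with y hy hyV
    obtain ⟨ε, hε, hball⟩ := Metric.isOpen_iff.1 hVopen y hyV
    set c : ℝ := min (ε / 3) ρ with hc
    have hc0 : 0 < c := lt_min (by linarith) hρ
    -- only finitely many hitting indices have radius > c
    obtain ⟨m, hm⟩ := exists_nat_gt (max (‖y‖ + R) (1 / c))
    have hsub : {i | ‖y - x i‖ < r i} ∩ {i | c < r i} ⊆
        {i | ‖x i‖ < (m : ℝ) ∧ 1 / (m : ℝ) < r i} := by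
      rintro i ⟨hi1, hi2⟩
      have hm1 : ‖y‖ + R < m := lt_of_le_of_lt (le_max_left _ _) hm
      have hm2 : 1 / c < m := lt_of_le_of_lt (le_max_right _ _) hm
      have hmpos : (0:ℝ) < m := lt_trans (by positivity) hm2
      constructor
      · calc ‖x i‖ = ‖y - (y - x i)‖ := by congr 1; abel
          _ ≤ ‖y‖ + ‖y - x i‖ := norm_sub_le _ _
          _ < ‖y‖ + R := by linarith [lt_of_lt_of_le hi1 (hRi i)]
          _ < m := hm1
      · have h9 : 1 / (m:ℝ) < c := by
          rw [div_lt_iff₀ hmpos, mul_comm]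
          have := (div_lt_iff₀ hc0).1 hm2
          linarith
        exact lt_trans h9 hi2
    have hfin2 : ({i | ‖y - x i‖ < r i} ∩ {i | c < r i}).Finite :=
      (hfin m).subset hsub
    obtain ⟨i, hi⟩ := (hy.diff hfin2).nonempty
    have hyi : ‖y - x i‖ < r i := hi.1
    have hric : r i ≤ c := by
      by_contra hcon
      exact hi.2 ⟨hi.1, lt_of_not_ge hcon⟩
    have hsubV : closedBall (x i) (r i) ⊆ V := by
      intro z hz
      apply hball
      rw [mem_ball]
      have h1 : dist z (x i) ≤ r i := mem_closedBall.1 hz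
      have h2 : dist y (x i) < r i := by
        rw [dist_eq_norm]; exact hyi
      calc dist z y ≤ dist z (x i) + dist (x i) y := dist_triangle _ _ _
        _ = dist z (x i) + dist y (x i) := by rw [dist_comm (x i) y]
        _ < r i + r i := by linarith
        _ ≤ c + c := by linarith
        _ ≤ ε/3 + ε/3 := by have := min_le_left (ε/3) ρ; linarith [hc]
        _ < ε := by linarith
    have hit : i ∈ t := ⟨le_trans hric (min_le_right _ _), hsubV⟩
    exact mem_biUnion hit (by rw [mem_closedBall, dist_eq_norm]; exact hyi.le)
  -- Vitali covering lemma
  obtain ⟨u, hut, hud, hVit⟩ :=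
    Vitali.exists_disjoint_subfamily_covering_enlargement
      (fun i => closedBall (x i) (r i)) t r τ hτ
      (fun i _ => (hrpos i).le) R (fun i _ => hRi i)
      (fun i _ => (nonempty_closedBall).2 (hrpos i).le)
  -- enlargement inclusion
  have hincl : ∀ i ∈ t, ∃ b ∈ u,
      closedBall (x i) (r i) ⊆ closedBall (x b) ((2 * τ + 1) * r b) := by
    intro i hi
    obtain ⟨b, hbu, ⟨w, hw1, hw2⟩, hrb⟩ := hVit i hi
    refine ⟨b, hbu, fun z hz => ?_⟩
    rw [mem_closedBall] at *
    have h1 : dist z (x i) ≤ r i := hz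
    have h2 : dist w (x i) ≤ r i := mem_closedBall.1 hw1
    have h3 : dist w (x b) ≤ r b := mem_closedBall.1 hw2
    have hτrb : r i ≤ τ * r b := hrb
    have hrbpos : (0:ℝ) < r b := hrpos b
    calc dist z (x b) ≤ dist z (x i) + dist (x i) w + dist w (x b) :=
          dist_triangle4 _ _ _ _
      _ = dist z (x i) + dist w (x i) + dist w (x b) := by rw [dist_comm (x i) w]
      _ ≤ 2 * r i + r b := by linarith
      _ ≤ 2 * (τ * r b) + r b := by linarith
      _ = (2 * τ + 1) * r b := by ring
  -- measure computations
  have hτpos : (0:ℝ) < 2 * τ + 1 := by linarith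
  have hKlt : ((2 * τ + 1) ^ d : ℝ) < 2 * 3 ^ d := by
    rw [hτdef]; exact aux_tau d hd
  set K : ℝ≥0∞ := ENNReal.ofReal ((2 * τ + 1) ^ d) with hK
  have hball_meas : ∀ b : ι, volume (closedBall (x b) ((2 * τ + 1) * r b)) =
      K * volume (closedBall (x b) (r b)) := by
    intro b
    rw [Measure.addHaar_closedBall_mul_of_pos volume (x b) hτpos (r b),
      ← Measure.addHaar_closedBall_center volume (x b) (r := r b), hK,
      Module.finrank_fin_fun]
  have hucnt : u.Countable := u.to_countable
  set T : ℝ≥0∞ := ∑' b : u, volume (closedBall ((x : ι → Fin d → ℝ) b) (r b)) with hT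
  have hle : volume V ≤ K * T := by
    calc volume V = volume.restrict V univ := (Measure.restrict_apply_univ _).symm
      _ ≤ volume.restrict V (⋃ i ∈ t, closedBall (x i) (r i)) := by
          refine measure_mono_ae ?_
          filter_upwards [hcov] with y hy
          intro _
          exact hy
      _ ≤ volume (⋃ i ∈ t, closedBall (x i) (r i)) := Measure.restrict_apply_le _ _
      _ ≤ volume (⋃ b ∈ u, closedBall (x b) ((2 * τ + 1) * r b)) := by
          apply measure_mono
          refine iUnion₂_subset fun i hi => ?_
          obtain ⟨b, hbu, hsub⟩ := hincl i hi
          exact hsub.trans (subset_biUnion_of_mem (u := fun b => closedBall (x b) ((2 * τ + 1) * r b)) hbu)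
      _ ≤ ∑' b : u, volume (closedBall ((x : ι → Fin d → ℝ) b) ((2 * τ + 1) * r b)) :=
          measure_biUnion_le volume hucnt _
      _ = K * T := by
          rw [hT, ← ENNReal.tsum_mul_left]
          exact tsum_congr fun b => hball_meas b
  have hVpos : 0 < volume V := hVopen.measure_pos volume hVne
  have hVfin : volume V < ∞ := (hUbdd.subset hVU).measure_lt_top
  have hKne0 : K ≠ 0 := (ENNReal.ofReal_pos.2 (by positivity)).ne'
  have hKfin : K ≠ ∞ := ENNReal.ofReal_ne_top
  have h23 : ((2:ℝ≥0∞) * 3 ^ d) = ENNReal.ofReal (2 * 3 ^ d) := by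
    rw [ENNReal.ofReal_mul (by norm_num), ENNReal.ofReal_pow (by norm_num)]
    norm_num
  have h23ne0 : ((2:ℝ≥0∞) * 3 ^ d) ≠ 0 :=
    mul_ne_zero (by norm_num) (pow_ne_zero _ (by norm_num))
  have h23fin : ((2:ℝ≥0∞) * 3 ^ d) ≠ ∞ :=
    ENNReal.mul_ne_top (by norm_num) (ENNReal.pow_ne_top (by norm_num))
  have hKlt' : K < 2 * 3 ^ d := by
    rw [h23]
    exact (ENNReal.ofReal_lt_ofReal_iff (by positivity)).2 hKlt
  have htargetne0 : volume V / (2 * 3 ^ d) ≠ 0 := by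
    simp only [ne_eq, ENNReal.div_eq_zero_iff, not_or]
    exact ⟨hVpos.ne', h23fin⟩
  have htargetfin : volume V / (2 * 3 ^ d) ≠ ∞ :=
    (ENNReal.div_lt_top hVfin.ne h23ne0).ne
  have hTgt : volume V / (2 * 3 ^ d) < T := by
    have hdiv : volume V / K ≤ T := ENNReal.div_le_of_le_mul' hle
    refine lt_of_lt_of_le ?_ hdiv
    rw [ENNReal.lt_div_iff_mul_lt (Or.inl hKne0) (Or.inl hKfin)]
    calc volume V / (2 * 3 ^ d) * K < volume V / (2 * 3 ^ d) * (2 * 3 ^ d) :=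
          (ENNReal.mul_lt_mul_iff_right htargetne0 htargetfin).2 hKlt'
      _ = volume V := ENNReal.div_mul_cancel h23ne0 h23fin
  -- extract a finite subfamily
  have hTsum : T = ∑' i, u.indicator (fun i => volume (closedBall (x i) (r i))) i :=
    tsum_subtype u (fun i => volume (closedBall (x i) (r i)))
  rw [hTsum, ENNReal.tsum_eq_iSup_sum] at hTgt
  obtain ⟨s, hs⟩ := lt_iSup_iff.1 hTgt
  set S : Finset ι := s.filter (fun i => i ∈ u) with hS
  have hSu : ∀ i ∈ S, i ∈ u := fun i hi => (Finset.mem_filter.1 hi).2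
  have hSt : ∀ i ∈ S, i ∈ t := fun i hi => hut (hSu i hi)
  have hsum : ∑ i ∈ S, volume (closedBall (x i) (r i)) =
      ∑ i ∈ s, u.indicator (fun i => volume (closedBall (x i) (r i))) i := by
    rw [hS, Finset.sum_filter]
    exact Finset.sum_congr rfl fun i _ => by simp [Set.indicator_apply]
  refine ⟨S, ?_, ?_, ?_, ?_, ?_⟩
  · intro i hi
    exact hVU ((hSt i hi).2 (mem_closedBall_self (hrpos i).le))
  · intro i hi
    exact (hSt i hi).1
  · exact hud.subset fun i hi => hSu i (by simpa using hi)
  · intro i hi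
    exact (hSt i hi).2
  · rw [hsum]
    exact hs.le
end
end

section
/- Let (x_i, r_i)_{i∈I} be a homogeneous ubiquitous system in a nonempty open set U ⊆ ℝ^d. Then, for every real number c > 0, the family (x_i, c·r_i)_{i∈I} is also a homogeneous ubiquitous system in U. -/
open MeasureTheory Filter Set Metric
open scoped Topology ENNReal

noncomputable section

/-- Dilating all the approximation radii of a homogeneous ubiquitous system by a common
positive factor yields again a homogeneous ubiquitous system. -/
theorem stmt6 {ι : Type*} [Countable ι] [Infinite ι] (d : ℕ) (hd : 1 ≤ d)
    (x : ι → Fin d → ℝ) (r : ι → ℝ) (U : Set (Fin d → ℝ))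
    (hUopen : IsOpen U) (hUne : U.Nonempty)
    (h : IsHomUbiquitous x r U) (c : ℝ) (hc : 0 < c) :
    IsHomUbiquitous x (fun i => c * r i) U := by
  obtain ⟨⟨hpos, ⟨R, hR⟩, hfin⟩, hae⟩ := h
  rw [mem_upperBounds] at hR
  have hRi : ∀ i, r i ≤ R := fun i => hR _ ⟨i, rfl⟩
  constructor
  · refine ⟨fun i => mul_pos hc (hpos i), ⟨c * R, ?_⟩, fun m => ?_⟩
    · rintro _ ⟨i, rfl⟩
      exact mul_le_mul_of_nonneg_left (hRi i) hc.le
    · rcases Nat.eq_zero_or_pos m with hm | hm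
      · refine Set.Finite.subset (Set.finite_empty) ?_
        rintro i ⟨h1, _⟩
        rw [hm] at h1
        exact absurd h1 (by simpa using norm_nonneg (x i))
      obtain ⟨N, hN⟩ := exists_nat_ge (max (m : ℝ) (c * m))
      have hNm : (m : ℝ) ≤ N := le_trans (le_max_left _ _) hN
      have hNc : c * (m : ℝ) ≤ N := le_trans (le_max_right _ _) hN
      have hm' : (0 : ℝ) < m := by exact_mod_cast hm
      have hN0 : (0 : ℝ) < N := lt_of_lt_of_le hm' hNm
      refine (hfin N).subset ?_
      rintro i ⟨h1, h2⟩
      refine ⟨lt_of_lt_of_le h1 hNm, ?_⟩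
      rw [div_lt_iff₀ hm'] at h2
      rw [div_lt_iff₀ hN0]
      have h2' : 1 < c * r i * ↑m := h2
      nlinarith [h2', mul_le_mul_of_nonneg_left hNc (hpos i).le]
  · -- the a.e. part
    have hEnc : Encodable ι := Encodable.ofCountable ι
    have hDen : Denumerable ι := Denumerable.ofEncodableOfInfinite ι
    let e : ℕ ≃ ι := (Denumerable.eqv ι).symm
    set ρ : ℕ → ℕ → ℝ := fun m n => if ‖x (e n)‖ < (m : ℝ) then r (e n) else 0 with hρ
    have hρ_le : ∀ m n, ρ m n ≤ r (e n) := by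
      intro m n
      by_cases hb : ‖x (e n)‖ < (m : ℝ) <;> simp [hρ, hb, (hpos (e n)).le]
    have hρ_tendsto : ∀ m : ℕ, Tendsto (ρ m) atTop (𝓝 0) := by
      intro m
      rw [NormedAddCommGroup.tendsto_nhds_zero]
      intro ε hε
      obtain ⟨k, hk1, hk2⟩ : ∃ k : ℕ, (m : ℝ) ≤ k ∧ 1 / (k : ℝ) < ε := by
        obtain ⟨k, hk⟩ := exists_nat_ge (max (m : ℝ) (1 / ε + 1))
        refine ⟨k, le_trans (le_max_left _ _) hk, ?_⟩
        have h1 : 1 / ε + 1 ≤ (k : ℝ) := le_trans (le_max_right _ _) hk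
        have h2 : (0 : ℝ) < 1 / ε + 1 := by positivity
        rw [div_lt_iff₀ (lt_of_lt_of_le h2 h1)]
        nlinarith [mul_le_mul_of_nonneg_left h1 hε.le, mul_one_div_cancel hε.ne']
      have hsub : {n : ℕ | ¬ ‖ρ m n‖ < ε} ⊆ (fun n => e n) ⁻¹'
          {i | ‖x i‖ < (k : ℝ) ∧ 1 / (k : ℝ) < r i} := by
        intro n hn
        simp only [mem_setOf_eq, not_lt] at hn
        by_cases hb : ‖x (e n)‖ < (m : ℝ)
        · have hval : ρ m n = r (e n) := by simp [hρ, hb]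
          rw [hval, Real.norm_eq_abs, abs_of_pos (hpos (e n))] at hn
          exact ⟨lt_of_lt_of_le hb hk1, lt_of_lt_of_le hk2 hn⟩
        · have hval : ρ m n = 0 := by simp [hρ, hb]
          rw [hval] at hn
          simp at hn
          exact absurd hn (not_le.mpr hε)
      have hfin' : {n : ℕ | ¬ ‖ρ m n‖ < ε}.Finite :=
        Set.Finite.subset ((hfin k).preimage (e.injective.injOn)) hsub
      rw [← Nat.cofinite_eq_atTop]
      exact hfin'.eventually_cofinite_notMem.mono fun n hn => not_not.mp hn
    have key : ∀ m : ℕ,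
        (limsup (fun n => ball (x (e n)) (c * ρ m n)) atTop : Set (Fin d → ℝ)) =ᵐ[volume]
          (limsup (fun n => ball (x (e n)) (ρ m n)) atTop : Set (Fin d → ℝ)) := by
      intro m
      have := blimsup_thickening_mul_ae_eq (volume : Measure (Fin d → ℝ))
        (fun _ => True) (fun n => {x (e n)}) hc (ρ m) (hρ_tendsto m)
      simpa only [Metric.thickening_singleton, blimsup_true] using this
    have keyae : ∀ᵐ y ∂(volume.restrict U), ∀ m : ℕ,
        y ∈ (limsup (fun n => ball (x (e n)) (c * ρ m n)) atTop : Set (Fin d → ℝ)) ↔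
          y ∈ (limsup (fun n => ball (x (e n)) (ρ m n)) atTop : Set (Fin d → ℝ)) := by
      rw [ae_all_iff]
      intro m
      have h1 : ∀ᵐ y ∂(volume : Measure (Fin d → ℝ)),
          y ∈ (limsup (fun n => ball (x (e n)) (c * ρ m n)) atTop : Set (Fin d → ℝ)) ↔
            y ∈ (limsup (fun n => ball (x (e n)) (ρ m n)) atTop : Set (Fin d → ℝ)) :=
        eventuallyEq_set.mp (key m)
      exact h1.filter_mono (MeasureTheory.ae_mono Measure.restrict_le_self)
    filter_upwards [hae, keyae] with y hy1 hy2
    obtain ⟨m, hm⟩ := exists_nat_gt (‖y‖ + R)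
    have hmem : y ∈ (limsup (fun n => ball (x (e n)) (ρ m n)) atTop : Set (Fin d → ℝ)) := by
      rw [mem_limsup_iff_frequently_mem, Nat.frequently_atTop_iff_infinite]
      refine Set.Infinite.mono ?_ (hy1.image (e.symm.injective.injOn))
      rintro _ ⟨i, hi, rfl⟩
      simp only [mem_setOf_eq] at hi ⊢
      have hxi : ‖x i‖ < (m : ℝ) := by
        have hnb : ‖x i‖ ≤ ‖y‖ + ‖y - x i‖ := by
          simpa using norm_sub_le y (y - x i)
        calc ‖x i‖ ≤ ‖y‖ + ‖y - x i‖ := hnb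
          _ < ‖y‖ + R := by linarith [hi.trans_le (hRi i)]
          _ < m := hm
      have hval : ρ m (e.symm i) = r i := by
        simp [hρ, e.apply_symm_apply, hxi]
      rw [mem_ball, dist_eq_norm, e.apply_symm_apply, hval]
      exact hi
    have hmem' := (hy2 m).mpr hmem
    rw [mem_limsup_iff_frequently_mem, Nat.frequently_atTop_iff_infinite] at hmem'
    refine Set.Infinite.mono ?_ (hmem'.image (e.injective.injOn))
    rintro _ ⟨n, hn, rfl⟩
    simp only [mem_setOf_eq, mem_ball, dist_eq_norm] at hn ⊢
    by_cases hb : ‖x (e n)‖ < (m : ℝ)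
    · have hval : ρ m n = r (e n) := by simp [hρ, hb]
      rwa [hval] at hn
    · have hval : ρ m n = 0 := by simp [hρ, hb]
      rw [hval, mul_zero] at hn
      exact absurd hn (not_lt.mpr (norm_nonneg _))
end
end

section
/- Let g be a d-normalized gauge function, let λ be a nonempty dyadic cube belonging to Λ_g, and let F be a subset of ℝ^d. If L^d(λ \ F) = 0, then M^g_∞(F ∩ λ) = g(diam λ). -/
open MeasureTheory Filter Set
open scoped Topology ENNReal

noncomputable section

/-- The dyadic cube `2^{-j}(k + [0,1)^d)` of `ℝ^d`. -/
def dyadicCube (d : ℕ) (j : ℤ) (k : Fin d → ℤ) : Set (Fin d → ℝ) :=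
  {x | ∀ i, (k i : ℝ) * 2 ^ (-j) ≤ x i ∧ x i < ((k i : ℝ) + 1) * 2 ^ (-j)}

/-- A dyadic cube: the empty set, or a set of the form `2^{-j}(k + [0,1)^d)`. -/
def IsDyadicCube (d : ℕ) (S : Set (Fin d → ℝ)) : Prop :=
  S = ∅ ∨ ∃ (j : ℤ) (k : Fin d → ℤ), S = dyadicCube d j k

/-- The `d`-normalization `g_d` of a gauge function `g`:
`g_d(r) = r^d · inf_{0 < ρ ≤ r} g(ρ)/ρ^d` for `0 < r < ∞`, with `g_d(0) = 0` and
`g_d(∞) = ∞`. -/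
def normGauge (d : ℕ) (g : ℝ≥0∞ → ℝ≥0∞) : ℝ≥0∞ → ℝ≥0∞ := fun r =>
  if r = 0 then 0 else if r = ⊤ then ⊤
  else r ^ d * ⨅ ρ ∈ Set.Ioc (0 : ℝ≥0∞) r, g ρ / ρ ^ d

/-- A gauge function is `d`-normalized if it coincides with its `d`-normalization in a
neighborhood of zero. -/
def IsNormalized (d : ℕ) (g : ℝ≥0∞ → ℝ≥0∞) : Prop :=
  ∃ ε > (0 : ℝ≥0∞), Set.EqOn g (normGauge d g) (Set.Iio ε)

/-- For a `d`-normalized gauge function `g`, `ε_g` is the supremum of all `ε > 0` such that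
`g` is nondecreasing on `[0,ε]` and `r ↦ g(r)/r^d` is nonincreasing on `(0,ε]`. -/
def epsg (d : ℕ) (g : ℝ≥0∞ → ℝ≥0∞) : ℝ≥0∞ :=
  sSup {ε : ℝ≥0∞ | 0 < ε ∧ MonotoneOn g (Set.Iic ε) ∧
    AntitoneOn (fun r => g r / r ^ d) (Set.Ioc 0 ε)}

/-- The outer net measure `M^g_∞`, obtained from coverings by dyadic cubes of diameter
less than `ε_g`. -/
def Mginf (d : ℕ) (g : ℝ≥0∞ → ℝ≥0∞) (E : Set (Fin d → ℝ)) : ℝ≥0∞ :=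
  ⨅ (c : ℕ → Set (Fin d → ℝ)) (_ : E ⊆ ⋃ n, c n)
    (_ : ∀ n, IsDyadicCube d (c n) ∧ EMetric.diam (c n) < epsg d g),
    ∑' n, g (EMetric.diam (c n))

lemma dyadicCube_eq_pi (d : ℕ) (j : ℤ) (k : Fin d → ℤ) :
    dyadicCube d j k = Set.pi univ fun i => Ico ((k i:ℝ) * 2 ^ (-j)) (((k i:ℝ)+1) * 2 ^ (-j)) := by
  ext x; simp [dyadicCube, Set.mem_pi, Set.mem_Ico]

lemma diam_dyadicCube (d : ℕ) (hd : 1 ≤ d) (j : ℤ) (k : Fin d → ℤ) :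
    EMetric.diam (dyadicCube d j k) = ENNReal.ofReal ((2:ℝ) ^ (-j)) := by
  rw [dyadicCube_eq_pi]
  apply le_antisymm
  · apply EMetric.diam_pi_le_of_le
    intro b
    rw [Real.ediam_Ico]
    apply le_of_eq; congr 1; ring
  · have i0 : Fin d := ⟨0, hd⟩
    set a : Fin d → ℝ := fun i => (k i:ℝ) * 2 ^ (-j) with ha
    have hpow : (0:ℝ) < 2 ^ (-j) := by positivity
    have hmem : ∀ x ∈ Ico ((k i0:ℝ) * 2 ^ (-j)) (((k i0:ℝ)+1) * 2 ^ (-j)),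
        Function.update a i0 x ∈ Set.pi univ fun i => Ico ((k i:ℝ) * 2 ^ (-j)) (((k i:ℝ)+1) * 2 ^ (-j)) := by
      intro x hx i _
      rcases eq_or_ne i i0 with rfl | hne
      · simpa using hx
      · simp only [Function.update_of_ne hne, ha]
        exact ⟨le_refl _, by nlinarith [hpow]⟩
    have h1 : EMetric.diam (Ico ((k i0:ℝ) * 2 ^ (-j)) (((k i0:ℝ)+1) * 2 ^ (-j)))
        ≤ EMetric.diam (Set.pi univ fun i => Ico ((k i:ℝ) * 2 ^ (-j)) (((k i:ℝ)+1) * 2 ^ (-j))) := by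
      apply EMetric.diam_le
      intro x hx y hy
      calc edist x y = edist (Function.update a i0 x i0) (Function.update a i0 y i0) := by simp
        _ ≤ edist (Function.update a i0 x) (Function.update a i0 y) := edist_le_pi_edist _ _ _
        _ ≤ _ := EMetric.edist_le_diam_of_mem (hmem x hx) (hmem y hy)
    refine le_trans (le_of_eq ?_) h1
    rw [EMetric.diam, Real.ediam_Ico]; congr 1; ring

lemma volume_dyadicCube (d : ℕ) (j : ℤ) (k : Fin d → ℤ) :
    volume (dyadicCube d j k) = (ENNReal.ofReal ((2:ℝ) ^ (-j))) ^ d := by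
  rw [dyadicCube_eq_pi, volume_pi_pi]
  have : ∀ i : Fin d, volume (Ico ((k i:ℝ) * 2 ^ (-j)) (((k i:ℝ)+1) * 2 ^ (-j)))
      = ENNReal.ofReal ((2:ℝ) ^ (-j)) := by
    intro i; rw [Real.volume_Ico]; congr 1; ring
  rw [Finset.prod_congr rfl (fun i _ => this i), Finset.prod_const, Finset.card_univ,
    Fintype.card_fin]

lemma volume_eq_diam_pow (d : ℕ) (hd : 1 ≤ d) {S : Set (Fin d → ℝ)} (h : IsDyadicCube d S) :
    volume S = (EMetric.diam S) ^ d := by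
  rcases h with rfl | ⟨j, k, rfl⟩
  · simp [EMetric.diam, zero_pow (by omega : d ≠ 0)]
  · rw [volume_dyadicCube, diam_dyadicCube d hd]

lemma diam_dyadicCube_ne_top (d : ℕ) (hd : 1 ≤ d) {S : Set (Fin d → ℝ)} (h : IsDyadicCube d S) :
    EMetric.diam S ≠ ⊤ := by
  rcases h with rfl | ⟨j, k, rfl⟩
  · simp [EMetric.diam]
  · rw [diam_dyadicCube d hd]; exact ENNReal.ofReal_ne_top

/-- If `g` is a `d`-normalized gauge function, `λ` is a dyadic cube belonging to `Λ_g`, and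
`F` has full Lebesgue measure in `λ`, then `M^g_∞(F ∩ λ) = g(diam λ)`. -/
theorem stmt9 (d : ℕ) (hd : 1 ≤ d) (g : ℝ≥0∞ → ℝ≥0∞) (hg : IsGauge g)
    (hnorm : IsNormalized d g) (j : ℤ) (k : Fin d → ℤ)
    (hmem : EMetric.diam (dyadicCube d j k) < epsg d g)
    (F : Set (Fin d → ℝ)) (hfull : volume (dyadicCube d j k \ F) = 0) :
    Mginf d g (F ∩ dyadicCube d j k) = g (EMetric.diam (dyadicCube d j k)) := by
  set Q := dyadicCube d j k with hQ
  set r := EMetric.diam Q with hr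
  have hrval : r = ENNReal.ofReal ((2:ℝ) ^ (-j)) := diam_dyadicCube d hd j k
  have hr0 : 0 < r := by rw [hrval]; exact ENNReal.ofReal_pos.mpr (by positivity)
  have hrtop : r ≠ ⊤ := by rw [hrval]; exact ENNReal.ofReal_ne_top
  have hvolQ : volume Q = r ^ d := volume_eq_diam_pow d hd (Or.inr ⟨j, k, rfl⟩)
  have heps : 0 < epsg d g := lt_of_le_of_lt (zero_le) hmem
  apply le_antisymm
  · -- upper bound: cover by Q itself and empty sets
    set c : ℕ → Set (Fin d → ℝ) := fun n => if n = 0 then Q else ∅ with hc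
    refine iInf_le_of_le c (iInf_le_of_le ?_ (iInf_le_of_le ?_ ?_))
    · intro x hx
      exact Set.mem_iUnion.mpr ⟨0, by simpa [hc] using hx.2⟩
    · intro n
      rcases eq_or_ne n 0 with rfl | hn
      · exact ⟨Or.inr ⟨j, k, by simp [hc, hQ]⟩, by simpa [hc] using hmem⟩
      · refine ⟨Or.inl (by simp [hc, hn]), ?_⟩
        simp [hc, hn, heps, EMetric.diam]
    · rw [tsum_eq_single 0 (by intro n hn; simp [hc, hn, hg.1, EMetric.diam])]
      simp [hc, hr]
  · -- lower bound
    refine le_iInf fun c => le_iInf fun hcov => le_iInf fun hP => ?_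
    by_cases hcase : ∃ n, r ≤ EMetric.diam (c n)
    · obtain ⟨n, hn⟩ := hcase
      obtain ⟨ε, ⟨hε0, hmono, _⟩, hlt⟩ := lt_sSup_iff.mp ((hP n).2)
      calc g r ≤ g (EMetric.diam (c n)) :=
            hmono (le_of_lt (lt_of_le_of_lt hn hlt)) (le_of_lt hlt) hn
        _ ≤ _ := ENNReal.le_tsum n
    · push_neg at hcase
      obtain ⟨ε, ⟨hε0, _, hanti⟩, hlt⟩ := lt_sSup_iff.mp hmem
      have hvol : r ^ d ≤ ∑' n, (EMetric.diam (c n)) ^ d := by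
        have hsub : Q ⊆ (⋃ n, c n) ∪ (Q \ F) := by
          intro x hx
          by_cases hxF : x ∈ F
          · exact Or.inl (hcov ⟨hxF, hx⟩)
          · exact Or.inr ⟨hx, hxF⟩
        calc r ^ d = volume Q := hvolQ.symm
          _ ≤ volume ((⋃ n, c n) ∪ (Q \ F)) := measure_mono hsub
          _ ≤ volume (⋃ n, c n) + volume (Q \ F) := measure_union_le _ _
          _ = volume (⋃ n, c n) := by rw [hfull, add_zero]
          _ ≤ ∑' n, volume (c n) := measure_iUnion_le _
          _ = ∑' n, (EMetric.diam (c n)) ^ d := by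
              exact tsum_congr fun n => volume_eq_diam_pow d hd (hP n).1
      have key : ∀ n, (g r / r ^ d) * (EMetric.diam (c n)) ^ d ≤ g (EMetric.diam (c n)) := by
        intro n
        set t := EMetric.diam (c n) with ht
        rcases eq_or_ne t 0 with h0 | h0
        · simp [h0, zero_pow (by omega : d ≠ 0)]
        · have htmem : t ∈ Set.Ioc (0:ℝ≥0∞) ε :=
            ⟨h0.bot_lt, le_of_lt (lt_trans (hcase n) hlt)⟩
          have hrmem : r ∈ Set.Ioc (0:ℝ≥0∞) ε := ⟨hr0, le_of_lt hlt⟩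
          have hle : g r / r ^ d ≤ g t / t ^ d := hanti htmem hrmem (le_of_lt (hcase n))
          have httop : t ≠ ⊤ := diam_dyadicCube_ne_top d hd (hP n).1
          calc (g r / r ^ d) * t ^ d ≤ (g t / t ^ d) * t ^ d := mul_le_mul_left hle _
            _ = g t := ENNReal.div_mul_cancel (pow_ne_zero _ h0) (ENNReal.pow_ne_top httop)
      calc g r = (g r / r ^ d) * r ^ d :=
            (ENNReal.div_mul_cancel (pow_ne_zero _ hr0.ne') (ENNReal.pow_ne_top hrtop)).symm
        _ ≤ (g r / r ^ d) * ∑' n, (EMetric.diam (c n)) ^ d := mul_le_mul_right hvol _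
        _ = ∑' n, (g r / r ^ d) * (EMetric.diam (c n)) ^ d := ENNReal.tsum_mul_left.symm
        _ ≤ ∑' n, g (EMetric.diam (c n)) := ENNReal.tsum_le_tsum key
end
end
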